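/- For every m ≥ 2 and n ≥ 2, the disjoint union of m copies of the ladder L_n = P_n × P_2 admits a C₄-supermagic labeling with magic constant m(17n−2)+4. -/

import Mathlib

/-!
Enumerate the vertices `u`, the vertices `v`, the rungs, the `u`-path edges and the `v`-path
edges of `mLₙ` as consecutive blocks of labels, each block in the column-major order
`k = j + m i` (copy `j`, position `i`), with the `v`-block and both path-edge blocks run
backwards. Passing from position `i` to `i + 1` adds `m` to `k`, so in the square at `k` the
two `u`-labels, the two `v`-labels, the two rung labels and the two path-edge labels contribute
`2k`, `-2k`, `2k` and `-2k` respectively, and its weight does not depend on `k`.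
-/

abbrev MLadderElem (m n : ℕ) : Type :=
  ((Fin m × Fin n) ⊕ (Fin m × Fin n)) ⊕
    ((Fin m × Fin n) ⊕ ((Fin m × Fin (n - 1)) ⊕ (Fin m × Fin (n - 1))))

theorem Equiv.range_fin_val_add_one {α : Type*} {N : ℕ} (e : α ≃ Fin N) :
    Set.range (fun x => (e x : ℕ) + 1) = Set.Icc 1 N := by
  ext y
  constructor
  · rintro ⟨x, rfl⟩
    exact ⟨Nat.le_add_left 1 _, (e x).isLt⟩
  · rintro ⟨hy₁, hy₂⟩
    exact ⟨e.symm ⟨y - 1, by omega⟩, by simp only [Equiv.apply_symm_apply]; omega⟩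

namespace MLadder

def columnIndex (m n : ℕ) : Fin m × Fin n ≃ Fin (n * m) :=
  (Equiv.prodComm _ _).trans finProdFinEquiv

@[simp]
theorem columnIndex_val {m n : ℕ} (j : Fin m) (i : Fin n) :
    (columnIndex m n (j, i) : ℕ) = j + m * i :=
  finProdFinEquiv_apply_val _

theorem columnIndex_lt {m n : ℕ} (j : Fin m) (i : Fin n) : j + m * i < n * m := by
  simpa using (columnIndex m n (j, i)).isLt

def enum (m n : ℕ) :
    MLadderElem m n ≃ Fin (n * m + n * m + (n * m + ((n - 1) * m + (n - 1) * m))) :=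
  (Equiv.sumCongr
      ((Equiv.sumCongr (columnIndex m n) ((columnIndex m n).trans Fin.revPerm)).trans finSumFinEquiv)
      ((Equiv.sumCongr (columnIndex m n)
          ((Equiv.sumCongr ((columnIndex m (n - 1)).trans Fin.revPerm)
              ((columnIndex m (n - 1)).trans Fin.revPerm)).trans finSumFinEquiv)).trans
        finSumFinEquiv)).trans
    finSumFinEquiv

def label (m n : ℕ) (x : MLadderElem m n) : ℕ := (enum m n x : ℕ) + 1

theorem label_injective (m n : ℕ) : Function.Injective (label m n) :=
  (add_left_injective 1).comp (Fin.val_injective.comp (enum m n).injective)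

theorem blockSizes_sum_eq (m n : ℕ) :
    n * m + n * m + (n * m + ((n - 1) * m + (n - 1) * m)) = 2 * m * n + (3 * m * n - 2 * m) := by
  cases n with
  | zero => simp
  | succ n =>
    simp only [Nat.add_sub_cancel]
    have : 2 * m ≤ 3 * m * (n + 1) := by nlinarith
    zify [this]
    ring

theorem range_label (m n : ℕ) :
    Set.range (label m n) = Set.Icc 1 (2 * m * n + (3 * m * n - 2 * m)) := by
  rw [← blockSizes_sum_eq]
  exact (enum m n).range_fin_val_add_one

theorem label_vertex_le (m n : ℕ) (x : (Fin m × Fin n) ⊕ (Fin m × Fin n)) :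
    label m n (.inl x) ≤ 2 * m * n := by
  have : (enum m n (.inl x) : ℕ) < n * m + n * m := by simp [enum]
  rw [label]
  linarith

section Labels

variable {m n : ℕ} (j : Fin m)

theorem label_u (i : Fin n) : label m n (.inl (.inl (j, i))) = j + m * i + 1 := by
  simp [label, enum]

theorem label_v (i : Fin n) : label m n (.inl (.inr (j, i))) = 2 * (n * m) - (j + m * i) := by
  have := columnIndex_lt j i
  simp only [label, enum, Equiv.trans_apply, Equiv.sumCongr_apply, Sum.map_inl, Sum.map_inr,
    Fin.revPerm_apply, finSumFinEquiv_apply_left, finSumFinEquiv_apply_right, Fin.val_castAdd,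
    Fin.val_natAdd, Fin.val_rev, columnIndex_val]
  omega

theorem label_rung (i : Fin n) :
    label m n (.inr (.inl (j, i))) = 2 * (n * m) + (j + m * i) + 1 := by
  simp only [label, enum, Equiv.trans_apply, Equiv.sumCongr_apply, Sum.map_inl, Sum.map_inr,
    finSumFinEquiv_apply_left, finSumFinEquiv_apply_right, Fin.val_castAdd,
    Fin.val_natAdd, columnIndex_val]
  omega

theorem label_uPath (i : Fin (n - 1)) :
    label m n (.inr (.inr (.inl (j, i)))) = 3 * (n * m) + (n - 1) * m - (j + m * i) := by
  have := columnIndex_lt j i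
  simp only [label, enum, Equiv.trans_apply, Equiv.sumCongr_apply, Sum.map_inl, Sum.map_inr,
    Fin.revPerm_apply, finSumFinEquiv_apply_left, finSumFinEquiv_apply_right, Fin.val_castAdd,
    Fin.val_natAdd, Fin.val_rev, columnIndex_val]
  omega

theorem label_vPath (i : Fin (n - 1)) :
    label m n (.inr (.inr (.inr (j, i)))) = 3 * (n * m) + 2 * ((n - 1) * m) - (j + m * i) := by
  have := columnIndex_lt j i
  simp only [label, enum, Equiv.trans_apply, Equiv.sumCongr_apply, Sum.map_inr,
    Fin.revPerm_apply, finSumFinEquiv_apply_right,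
    Fin.val_natAdd, Fin.val_rev, columnIndex_val]
  omega

theorem square_weight (i : Fin (n - 1)) :
    label m n (.inl (.inl (j, ⟨i, by omega⟩))) + label m n (.inl (.inl (j, ⟨i + 1, by omega⟩)))
      + label m n (.inl (.inr (j, ⟨i, by omega⟩))) + label m n (.inl (.inr (j, ⟨i + 1, by omega⟩)))
      + label m n (.inr (.inl (j, ⟨i, by omega⟩))) + label m n (.inr (.inl (j, ⟨i + 1, by omega⟩)))
      + label m n (.inr (.inr (.inl (j, i)))) + label m n (.inr (.inr (.inr (j, i))))
      = m * (17 * n - 2) + 4 := by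
  have hk := columnIndex_lt j i
  have hP : (n - 1) * m + m = n * m := by
    rw [← Nat.succ_mul, Nat.succ_eq_add_one, Nat.sub_add_cancel (by have := i.isLt; omega)]
  have h17 : m * (17 * n - 2) = 17 * (n * m) - 2 * m := by
    rw [Nat.mul_sub, mul_comm m 2, mul_left_comm, mul_comm m n]
  simp only [label_u, label_v, label_rung, label_uPath, label_vPath, mul_add_one, h17]
  omega

end Labels

end MLadder

/-- `mLₙ` (m ≥ 2 copies of the ladder `Lₙ = Pₙ × P₂`, n ≥ 2) is `C₄`-supermagic
with magic constant `m(17n - 2) + 4`.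
Vertices: `u`-vertices and `v`-vertices, each `Fin m × Fin n`.
Edges: rungs `Fin m × Fin n`, `u`-path edges and `v`-path edges `Fin m × Fin (n-1)`. -/
theorem mLadder_C4_supermagic (m n : ℕ) :
    ∃ f : ((Fin m × Fin n) ⊕ (Fin m × Fin n)) ⊕
          ((Fin m × Fin n) ⊕ ((Fin m × Fin (n - 1)) ⊕ (Fin m × Fin (n - 1)))) → ℕ,
      Function.Injective f ∧
      Set.range f = Set.Icc 1 (2 * m * n + (3 * m * n - 2 * m)) ∧
      (∀ x : (Fin m × Fin n) ⊕ (Fin m × Fin n), f (Sum.inl x) ≤ 2 * m * n) ∧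
      ∀ (j : Fin m) (i : Fin (n - 1)),
        f (Sum.inl (Sum.inl (j, ⟨i.val, by have := i.isLt; omega⟩)))
          + f (Sum.inl (Sum.inl (j, ⟨i.val + 1, by have := i.isLt; omega⟩)))
          + f (Sum.inl (Sum.inr (j, ⟨i.val, by have := i.isLt; omega⟩)))
          + f (Sum.inl (Sum.inr (j, ⟨i.val + 1, by have := i.isLt; omega⟩)))
          + f (Sum.inr (Sum.inl (j, ⟨i.val, by have := i.isLt; omega⟩)))
          + f (Sum.inr (Sum.inl (j, ⟨i.val + 1, by have := i.isLt; omega⟩)))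
          + f (Sum.inr (Sum.inr (Sum.inl (j, i))))
          + f (Sum.inr (Sum.inr (Sum.inr (j, i))))
        = m * (17 * n - 2) + 4 :=
  ⟨MLadder.label m n, MLadder.label_injective m n, MLadder.range_label m n,
    MLadder.label_vertex_le m n, MLadder.square_weight⟩
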